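/- arXiv:1502.03372 — 5 statements merged into one kernel-verified Lean document; each statement's English description precedes it below -/
import Mathlib

section
/- Let x* optimize max{∑_j w_j x_j^{1−α}/(1−α) : Ax ≤ 1, x ≥ 0} and let z* optimize the LP max{∑_j w_j z_j : Az ≤ 1, z ≥ 0}, with the same nonnegative matrix A whose nonzero entries lie in [1, A_max] and the same positive weights w. If ε ∈ (0, 1/6] and 0 < α ≤ (ε/4)/ln(n A_max / ε), then ∑_j w_j z*_j ≥ (1 − 3ε) ∑_j w_j (x*_j)^{1−α}/(1−α). -/
open Real Finset

/-! With `δ = ε / (n A_max)` every `x ≥ 0` satisfies `x ^ (1 - α) ≤ δ ^ (-α) (x + δ)`, and the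
bound on `α` makes `δ ^ (-α) ≤ exp (ε / 4)`. Since `x*` is LP-feasible, `∑ w_j x*_j ≤ V`, the LP
value; since each `e_j / A_max` is LP-feasible, `w_j ≤ A_max V`, so `∑ w_j ≤ n A_max V`. Hence
`∑ w_j (x*_j) ^ (1 - α) ≤ exp (ε / 4) (1 + ε) V`, and `(1 - 3ε)(1 + ε) exp (ε / 4) ≤ 1 - α`. -/

lemma rpow_one_sub_le_rpow_neg_mul_add {x δ α : ℝ} (hx : 0 ≤ x) (hδ : 0 < δ) (hα0 : 0 ≤ α)
    (hα1 : α ≤ 1) : x ^ (1 - α) ≤ δ ^ (-α) * (x + δ) := by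
  have hy : 0 < max x δ := lt_max_of_lt_right hδ
  calc x ^ (1 - α) ≤ max x δ ^ (1 - α) := rpow_le_rpow hx (le_max_left x δ) (by linarith)
    _ = max x δ ^ (-α) * max x δ := by rw [sub_eq_neg_add, rpow_add hy, rpow_one]
    _ ≤ δ ^ (-α) * (x + δ) :=
      mul_le_mul (rpow_le_rpow_of_nonpos hδ (le_max_right x δ) (neg_nonpos.2 hα0))
        (max_le_add_of_nonneg hx hδ.le) hy.le (rpow_nonneg hδ.le _)

lemma inv_rpow_neg_le_exp {c α β : ℝ} (hc : 0 < c) (h : α * log c ≤ β) :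
    c⁻¹ ^ (-α) ≤ exp β := by
  rw [inv_rpow hc.le, rpow_neg hc.le, inv_inv, rpow_def_of_pos hc, mul_comm]
  exact exp_le_exp.2 h

lemma one_sub_three_mul_mul_one_add_mul_exp_le {ε α : ℝ} (hε0 : 0 ≤ ε) (hε4 : ε ≤ 4)
    (hα : α ≤ ε / 4) : (1 - 3 * ε) * (1 + ε) * exp (ε / 4) ≤ 1 - α := by
  have hexp : (1 - ε / 4) * exp (ε / 4) ≤ 1 :=
    calc (1 - ε / 4) * exp (ε / 4) ≤ exp (-(ε / 4)) * exp (ε / 4) := by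
          gcongr
          linarith [add_one_le_exp (-(ε / 4))]
      _ = 1 := by rw [← exp_add, neg_add_cancel, exp_zero]
  calc (1 - 3 * ε) * (1 + ε) * exp (ε / 4) ≤ (1 - ε / 4) ^ 2 * exp (ε / 4) := by
        gcongr ?_ * _
        nlinarith
    _ = (1 - ε / 4) * ((1 - ε / 4) * exp (ε / 4)) := by ring
    _ ≤ 1 - ε / 4 := mul_le_of_le_one_right (by linarith) hexp
    _ ≤ 1 - α := by linarith

section Packing

open Matrix

variable {ι κ : Type*} [Fintype κ] {A : Matrix ι κ ℝ} {w zs : κ → ℝ}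

def PackingFeasible (A : Matrix ι κ ℝ) (x : κ → ℝ) : Prop :=
  A *ᵥ x ≤ 1 ∧ 0 ≤ x

/-- A column of zeros would let the LP increase `z j` without bound. -/
lemma exists_ne_zero_of_packing_opt [DecidableEq κ] {j : κ} (hwj : 0 < w j)
    (hzs : PackingFeasible A zs) (hopt : ∀ z, PackingFeasible A z → w ⬝ᵥ z ≤ w ⬝ᵥ zs) :
    ∃ i, A i j ≠ 0 := by
  by_contra! hcol
  have hfeas : PackingFeasible A (zs + Pi.single j 1) := by
    have hAj : A.col j = 0 := funext hcol
    refine ⟨by simpa [mulVec_add, mulVec_single_one, hAj] using hzs.1, ?_⟩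
    exact add_nonneg hzs.2 (Pi.single_nonneg.2 zero_le_one)
  have := hopt _ hfeas
  rw [dotProduct_add, dotProduct_single, mul_one] at this
  linarith

lemma div_le_of_packing_opt [DecidableEq κ] {Amax : ℝ} (hAmax : 0 < Amax)
    (hA : ∀ i j, A i j ≤ Amax) (hopt : ∀ z, PackingFeasible A z → w ⬝ᵥ z ≤ w ⬝ᵥ zs) (j : κ) :
    w j / Amax ≤ w ⬝ᵥ zs := by
  have hfeas : PackingFeasible A (Pi.single j Amax⁻¹) := by
    refine ⟨fun i => ?_, Pi.single_nonneg.2 (inv_nonneg.2 hAmax.le)⟩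
    simpa [← div_eq_mul_inv, div_le_one hAmax] using hA i j
  simpa [dotProduct_single, div_eq_mul_inv] using hopt _ hfeas

theorem sum_mul_rpow_one_sub_le_of_packing_opt {Amax α δ : ℝ} {x : κ → ℝ} (hAmax : 0 < Amax)
    (hA : ∀ i j, A i j ≤ Amax) (hw : ∀ j, 0 ≤ w j)
    (hopt : ∀ z, PackingFeasible A z → w ⬝ᵥ z ≤ w ⬝ᵥ zs)
    (hx : PackingFeasible A x) (hα0 : 0 ≤ α) (hα1 : α ≤ 1) (hδ : 0 < δ) :
    ∑ j, w j * x j ^ (1 - α) ≤ δ ^ (-α) * (1 + δ * Fintype.card κ * Amax) * (w ⬝ᵥ zs) := by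
  classical
  set V := w ⬝ᵥ zs
  have hwV : ∑ j, w j ≤ Fintype.card κ * Amax * V := by
    calc ∑ j, w j ≤ ∑ _j : κ, Amax * V :=
          sum_le_sum fun j _ => (div_le_iff₀' hAmax).1 (div_le_of_packing_opt hAmax hA hopt j)
      _ = Fintype.card κ * Amax * V := by simp [mul_assoc]
  calc ∑ j, w j * x j ^ (1 - α) ≤ ∑ j, δ ^ (-α) * (w j * x j + δ * w j) :=
        sum_le_sum fun j _ => by
          have := rpow_one_sub_le_rpow_neg_mul_add (hx.2 j) hδ hα0 hα1
          calc w j * x j ^ (1 - α) ≤ w j * (δ ^ (-α) * (x j + δ)) := by gcongr; exact hw j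
            _ = _ := by ring
    _ = δ ^ (-α) * (w ⬝ᵥ x + δ * ∑ j, w j) := by
        rw [← mul_sum, sum_add_distrib, mul_sum, dotProduct]
    _ ≤ δ ^ (-α) * (V + δ * (Fintype.card κ * Amax * V)) := by
        gcongr
        exact hopt x hx
    _ = _ := by ring

end Packing

theorem stmt_7_general (m n : ℕ) (A : Fin m → Fin n → ℝ) (Amax : ℝ)
    (hA1 : ∀ i j, A i j ≠ 0 → 1 ≤ A i j ∧ A i j ≤ Amax)
    (w : Fin n → ℝ) (hw : ∀ j, 0 < w j)
    (ε α : ℝ) (hε0 : 0 < ε) (hε6 : ε ≤ 1 / 6)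
    (hα0 : 0 < α) (hαub : α ≤ (ε / 4) / Real.log ((n : ℝ) * Amax / ε))
    (xs : Fin n → ℝ)
    (hxfeas : (∀ i, ∑ j, A i j * xs j ≤ 1) ∧ (∀ j, 0 ≤ xs j))
    (zs : Fin n → ℝ)
    (hzfeas : (∀ i, ∑ j, A i j * zs j ≤ 1) ∧ (∀ j, 0 ≤ zs j))
    (hzopt : ∀ z : Fin n → ℝ, (∀ i, ∑ j, A i j * z j ≤ 1) → (∀ j, 0 ≤ z j) →
      ∑ j, w j * z j ≤ ∑ j, w j * zs j) :
    ∑ j, w j * zs j ≥ (1 - 3 * ε) * ∑ j, w j * xs j ^ (1 - α) / (1 - α) := by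
  rcases Nat.eq_zero_or_pos n with rfl | hn
  · simp
  have hopt : ∀ z, PackingFeasible A z → w ⬝ᵥ z ≤ w ⬝ᵥ zs := fun z hz => hzopt z hz.1 hz.2
  have hAmax : 1 ≤ Amax := by
    obtain ⟨i, hi⟩ := exists_ne_zero_of_packing_opt (hw ⟨0, hn⟩) hzfeas hopt
    exact (hA1 i _ hi).1.trans (hA1 i _ hi).2
  have hAle : ∀ i j, A i j ≤ Amax := fun i j => by
    by_cases h : A i j = 0
    · linarith
    · exact (hA1 i j h).2
  set c := (n : ℝ) * Amax / ε
  have hc : 6 ≤ c := by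
    rw [le_div_iff₀ hε0]
    nlinarith [(Nat.one_le_cast (α := ℝ)).2 hn]
  have hlogc : 1 ≤ log c := (le_log_iff_exp_le (by linarith)).2 (by linarith [exp_one_lt_d9])
  have hαlog : α * log c ≤ ε / 4 := (le_div_iff₀ (by linarith)).1 hαub
  have hα4 : α ≤ ε / 4 := by nlinarith
  have hδc : 1 + c⁻¹ * (Fintype.card (Fin n) : ℝ) * Amax = 1 + ε := by
    simp only [Fintype.card_fin, c]
    field_simp
  have hS := sum_mul_rpow_one_sub_le_of_packing_opt (by linarith) hAle (fun j => (hw j).le) hopt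
    hxfeas hα0.le (by linarith) (inv_pos.2 (by linarith : (0 : ℝ) < c))
  rw [hδc] at hS
  have hV : 0 ≤ w ⬝ᵥ zs := by
    simpa [dotProduct] using hzopt 0 (by simp) (fun _ => le_rfl)
  rw [ge_iff_le, ← sum_div, mul_div_assoc', div_le_iff₀' (by linarith)]
  calc (1 - 3 * ε) * ∑ j, w j * xs j ^ (1 - α)
      ≤ (1 - 3 * ε) * (exp (ε / 4) * (1 + ε) * (w ⬝ᵥ zs)) := by
        gcongr
        · linarith
        · exact hS.trans (by gcongr; exact inv_rpow_neg_le_exp (by linarith) hαlog)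
    _ = (1 - 3 * ε) * (1 + ε) * exp (ε / 4) * (w ⬝ᵥ zs) := by ring
    _ ≤ (1 - α) * (w ⬝ᵥ zs) := by
        gcongr
        exact one_sub_three_mul_mul_one_add_mul_exp_le hε0.le (by linarith) hα4

/-- For very small α, the LP optimum 3ε-approximates the α-fair optimum. -/
theorem stmt_7 (m n : ℕ) (A : Fin m → Fin n → ℝ) (Amax : ℝ)
    (hA : ∀ i j, 0 ≤ A i j)
    (hA1 : ∀ i j, A i j ≠ 0 → 1 ≤ A i j ∧ A i j ≤ Amax)
    (w : Fin n → ℝ) (hw : ∀ j, 0 < w j)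
    (ε α : ℝ) (hε0 : 0 < ε) (hε6 : ε ≤ 1 / 6)
    (hα0 : 0 < α) (hαub : α ≤ (ε / 4) / Real.log ((n : ℝ) * Amax / ε))
    (xs : Fin n → ℝ)
    (hxfeas : (∀ i, ∑ j, A i j * xs j ≤ 1) ∧ (∀ j, 0 ≤ xs j))
    (hxopt : ∀ x : Fin n → ℝ, (∀ i, ∑ j, A i j * x j ≤ 1) → (∀ j, 0 ≤ x j) →
      ∑ j, w j * x j ^ (1 - α) / (1 - α) ≤ ∑ j, w j * xs j ^ (1 - α) / (1 - α))
    (zs : Fin n → ℝ)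
    (hzfeas : (∀ i, ∑ j, A i j * zs j ≤ 1) ∧ (∀ j, 0 ≤ zs j))
    (hzopt : ∀ z : Fin n → ℝ, (∀ i, ∑ j, A i j * z j ≤ 1) → (∀ j, 0 ≤ z j) →
      ∑ j, w j * z j ≤ ∑ j, w j * zs j) :
    ∑ j, w j * zs j ≥ (1 - 3 * ε) * ∑ j, w j * xs j ^ (1 - α) / (1 - α) :=
  stmt_7_general m n A Amax hA1 w hw ε α hε0 hε6 hα0 hαub xs hxfeas zs hzfeas hzopt
end

section
/- Let α > 1, 0 < ε and εα ≤ 9/10, let γ = ε/4, and define r_α(ξ) = 1 + (1 + 3ε)(α − 1)ξ − α ξ^{(α−1)/α}. Then for every ξ ∈ (1 − γ, 1 + γ), r_α(ξ) ≤ ε(3α − 2). -/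
open Real

/-!
Write `ξ = 1 + d`. Bernoulli's inequality `ξ ^ (1/α) ≤ 1 + d/α` and the splitting
`ξ = ξ ^ (1/α) * ξ ^ ((α-1)/α)` give the lower bound `ξ ^ ((α-1)/α) ≥ α ξ / (α + d)`.
Substituting it turns the claim into a polynomial inequality in `α, ε, d`, which reduces to
`(α-1) d² ≤ ε (α + d) (1 - 3(α-1) d)`; for `|d| < ε/4` and `εα ≤ 9/10` the left side is at most
`9ε/160` while the right side is at least `(31/40)(13/40) ε`.
-/

lemma mul_le_add_sub_one_mul_rpow {α ξ : ℝ} (hα : 1 ≤ α) (hξ : 0 < ξ) :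
    α * ξ ≤ (α + (ξ - 1)) * ξ ^ ((α - 1) / α) := by
  have hα0 : 0 < α := by linarith
  have hbernoulli : ξ ^ (1 / α) ≤ 1 + 1 / α * (ξ - 1) := by
    simpa using rpow_one_add_le_one_add_mul_self (s := ξ - 1) (by linarith)
      (p := 1 / α) (by positivity) (by rw [div_le_one hα0]; exact hα)
  have hsplit : ξ ^ (1 / α) * ξ ^ ((α - 1) / α) = ξ := by
    rw [← rpow_add hξ, ← add_div, add_sub_cancel, div_self hα0.ne', rpow_one]
  calc α * ξ = α * (ξ ^ (1 / α) * ξ ^ ((α - 1) / α)) := by rw [hsplit]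
    _ ≤ α * ((1 + 1 / α * (ξ - 1)) * ξ ^ ((α - 1) / α)) := by gcongr
    _ = (α + (ξ - 1)) * ξ ^ ((α - 1) / α) := by field_simp

lemma sub_one_mul_sq_le {α ε d : ℝ} (hα : 1 ≤ α) (hεα : ε * α ≤ 9 / 10)
    (hd : |d| < ε / 4) :
    (α - 1) * d ^ 2 ≤ ε * (α + d) * (1 - 3 * (α - 1) * d) := by
  obtain ⟨hd₁, hd₂⟩ := abs_lt.mp hd
  have hε : 0 < ε := by linarith [abs_nonneg d]
  have hε₁ : ε * (α - 1) ≤ 9 / 10 - ε := by linarith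
  have hdsq : d ^ 2 ≤ (ε / 4) ^ 2 := by rw [← sq_abs]; gcongr
  have hlhs : (α - 1) * d ^ 2 ≤ 9 / 160 * ε := by
    nlinarith [mul_le_mul_of_nonneg_left hdsq (sub_nonneg.2 hα)]
  have hfactor₁ : 31 / 40 ≤ α + d := by nlinarith
  have hfactor₂ : 13 / 40 ≤ 1 - 3 * (α - 1) * d := by nlinarith
  nlinarith [mul_le_mul hfactor₁ hfactor₂ (by norm_num) (by linarith)]

theorem stmt_11_general (α ε γ : ℝ) (hα : 1 < α) (hεα : ε * α ≤ 9 / 10)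
    (hγ : γ = ε / 4) :
    ∀ ξ : ℝ, 1 - γ < ξ → ξ < 1 + γ →
      1 + (1 + 3 * ε) * (α - 1) * ξ - α * ξ ^ ((α - 1) / α) ≤ ε * (3 * α - 2) := by
  intro ξ h₁ h₂
  subst hγ
  have hd : |ξ - 1| < ε / 4 := abs_sub_lt_iff.mpr ⟨by linarith, by linarith⟩
  have hε : 0 < ε := by linarith
  have hξ : 0 < ξ := by nlinarith
  have hαξ : 0 < α + (ξ - 1) := by linarith
  have hpow := mul_le_add_sub_one_mul_rpow hα.le hξ
  have hpoly := sub_one_mul_sq_le hα.le hεα hd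
  refine le_of_mul_le_mul_left ?_ hαξ
  nlinarith [mul_le_mul_of_nonneg_left hpow (by linarith : (0 : ℝ) ≤ α)]

/-- For α > 1, εα ≤ 9/10, γ = ε/4:
r_α(ξ) = 1 + (1+3ε)(α-1)ξ - α ξ^((α-1)/α) ≤ ε(3α-2) on (1-γ, 1+γ). -/
theorem stmt_11 (α ε γ : ℝ) (hα : 1 < α) (hε0 : 0 < ε) (hεα : ε * α ≤ 9 / 10)
    (hγ : γ = ε / 4) :
    ∀ ξ : ℝ, 1 - γ < ξ → ξ < 1 + γ →
      1 + (1 + 3 * ε) * (α - 1) * ξ - α * ξ ^ ((α - 1) / α) ≤ ε * (3 * α - 2) :=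
  stmt_11_general α ε γ hα hεα hγ
end

section
/- Fix δ_j > 0 with δ_j ≤ 1 for each j, C = w_j/δ_j^α for all j (assumed consistent), κ > 0, and dual variables y_i(x) = C · exp(κ(∑_j A_{ij} x_j − 1)). Suppose x ≥ 0 with x_j ≥ δ_j for all j, and suppose some constraint k satisfies ∑_j A_{kj} x_j > 1 and A_{kj} ≥ 1 for some j. Then x_j^α ∑_{i=1}^m y_i(x) A_{ij} ≥ x_j^α y_k(x) A_{kj} > w_j; in particular, x_j^α ∑_i y_i(x) A_{ij} > w_j(1 − γ) for any γ ∈ (0,1), so no variable appearing in a violated constraint satisfies the increase condition x_j^α ∑_i y_i(x) A_{ij} ≤ w_j(1 − γ). -/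
open Real Finset

lemma le_mul_rpow_of_eq_div_rpow {w δ x α C : ℝ} (hw : 0 ≤ w) (hδ : 0 < δ) (hδx : δ ≤ x)
    (hα : 0 ≤ α) (hC : C = w / δ ^ α) : w ≤ C * x ^ α := by
  rw [hC, div_mul_eq_mul_div, le_div_iff₀ (rpow_pos_of_pos hδ α)]
  exact mul_le_mul_of_nonneg_left (rpow_le_rpow hδ.le hδx hα) hw

lemma one_lt_exp_mul_sub_one {κ s : ℝ} (hκ : 0 < κ) (hs : 1 < s) : 1 < exp (κ * (s - 1)) :=
  one_lt_exp_iff.mpr (mul_pos hκ (sub_pos.mpr hs))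

theorem stmt_17_general (m n : ℕ) (A : Fin m → Fin n → ℝ)
    (hA : ∀ i j, 0 ≤ A i j) (hA1 : ∀ i j, A i j ≠ 0 → 1 ≤ A i j)
    (w : Fin n → ℝ) (hw : ∀ j, 0 < w j)
    (α : ℝ) (hα : 0 < α)
    (δ : Fin n → ℝ) (hδ0 : ∀ j, 0 < δ j)
    (C : ℝ) (hC : ∀ j, C = w j / δ j ^ α)
    (κ : ℝ) (hκ : 0 < κ)
    (x : Fin n → ℝ) (hxδ : ∀ j, δ j ≤ x j)
    (k : Fin m) (hk : 1 < ∑ j, A k j * x j)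
    (j : Fin n) (hkj : A k j ≠ 0) :
    x j ^ α * ∑ i, (C * Real.exp (κ * (∑ j', A i j' * x j' - 1))) * A i j
      ≥ x j ^ α * (C * Real.exp (κ * (∑ j', A k j' * x j' - 1))) * A k j ∧
    x j ^ α * (C * Real.exp (κ * (∑ j', A k j' * x j' - 1))) * A k j > w j ∧
    ∀ γ : ℝ, 0 < γ → γ < 1 →
      x j ^ α * ∑ i, (C * Real.exp (κ * (∑ j', A i j' * x j' - 1))) * A i j
        > w j * (1 - γ) := by
  have hxα : 0 < x j ^ α := rpow_pos_of_pos ((hδ0 j).trans_le (hxδ j)) α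
  have hC_pos : 0 < C := hC j ▸ div_pos (hw j) (rpow_pos_of_pos (hδ0 j) α)
  have hy_pos : ∀ i, 0 < C * exp (κ * (∑ j', A i j' * x j' - 1)) :=
    fun i => mul_pos hC_pos (exp_pos _)
  have h_single : x j ^ α * ∑ i, (C * exp (κ * (∑ j', A i j' * x j' - 1))) * A i j
      ≥ x j ^ α * (C * exp (κ * (∑ j', A k j' * x j' - 1))) * A k j := by
    rw [ge_iff_le, mul_assoc]
    exact mul_le_mul_of_nonneg_left
      (single_le_sum (fun i _ => mul_nonneg (hy_pos i).le (hA i j)) (mem_univ k)) hxα.le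
  have h_violated : x j ^ α * (C * exp (κ * (∑ j', A k j' * x j' - 1))) * A k j > w j :=
    calc w j ≤ C * x j ^ α := le_mul_rpow_of_eq_div_rpow (hw j).le (hδ0 j) (hxδ j) hα.le (hC j)
      _ < C * x j ^ α * exp (κ * (∑ j', A k j' * x j' - 1)) :=
          lt_mul_of_one_lt_right (mul_pos hC_pos hxα) (one_lt_exp_mul_sub_one hκ hk)
      _ = x j ^ α * (C * exp (κ * (∑ j', A k j' * x j' - 1))) * 1 := by ring
      _ ≤ x j ^ α * (C * exp (κ * (∑ j', A k j' * x j' - 1))) * A k j :=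
          mul_le_mul_of_nonneg_left (hA1 k j hkj) (mul_pos hxα (hy_pos k)).le
  refine ⟨h_single, h_violated, fun γ hγ _ => ?_⟩
  have : w j * (1 - γ) < w j := mul_lt_of_lt_one_right (hw j) (by linarith)
  linarith

/-- If constraint k is violated, then for every variable x_j appearing in constraint k
the KKT quantity x_j^α ∑_i y_i(x) A_{ij} exceeds w_j, so x_j does not satisfy the
increase condition x_j^α ∑_i y_i(x) A_{ij} ≤ w_j(1-γ). -/
theorem stmt_17 (m n : ℕ) (A : Fin m → Fin n → ℝ)
    (hA : ∀ i j, 0 ≤ A i j) (hA1 : ∀ i j, A i j ≠ 0 → 1 ≤ A i j)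
    (w : Fin n → ℝ) (hw : ∀ j, 0 < w j)
    (α : ℝ) (hα : 0 < α)
    (δ : Fin n → ℝ) (hδ0 : ∀ j, 0 < δ j) (hδ1 : ∀ j, δ j ≤ 1)
    (C : ℝ) (hC : ∀ j, C = w j / δ j ^ α)
    (κ : ℝ) (hκ : 0 < κ)
    (x : Fin n → ℝ) (hx0 : ∀ j, 0 ≤ x j) (hxδ : ∀ j, δ j ≤ x j)
    (k : Fin m) (hk : 1 < ∑ j, A k j * x j)
    (j : Fin n) (hkj : A k j ≠ 0) :
    x j ^ α * ∑ i, (C * Real.exp (κ * (∑ j', A i j' * x j' - 1))) * A i j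
      ≥ x j ^ α * (C * Real.exp (κ * (∑ j', A k j' * x j' - 1))) * A k j ∧
    x j ^ α * (C * Real.exp (κ * (∑ j', A k j' * x j' - 1))) * A k j > w j ∧
    ∀ γ : ℝ, 0 < γ → γ < 1 →
      x j ^ α * ∑ i, (C * Real.exp (κ * (∑ j', A i j' * x j' - 1))) * A i j
        > w j * (1 - γ) :=
  stmt_17_general m n A hA hA1 w hw α hα δ hδ0 C hC κ hκ x hxδ k hk j hkj
end

section
/- Let y_i(x) = C·e^{κ(∑_j A_{ij} x_j − 1)} with C > 0, κ = (1/ε)·ln(C m A_max/(ε w_min)) where C m A_max/(ε w_min) > 1, and suppose x is feasible (Ax ≤ 1, x ≥ 0, x_j ≤ 1 for all j) with max_i ∑_j A_{ij} x_j < 1 − ε for some ε ∈ (0, 1). Then for every i, y_i(x) ≤ ε w_min/(m A_max), and consequently for every j, x_j^α ∑_{i=1}^m y_i(x) A_{ij} ≤ ε w_j ≤ w_j(1 − γ) for any γ ≤ 1 − ε. -/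
/-!
The constant `κ` is chosen so that a slack of `ε` gives `e^{κ(s - 1)} ≤ e^{-κε} = ε w_min / (C m A_max)`,
i.e. `y_i ≤ ε w_min / (m A_max)`. Summing the `m` terms `y_i A_ij ≤ y_i A_max` gives at most
`ε w_min ≤ ε w_j`, and the factor `x_j^α` is at most `1`.
-/

open Real Finset

lemma exp_mul_sub_one_le_inv {R ε s : ℝ} (hε : 0 < ε) (hR : 1 < R) (hs : s ≤ 1 - ε) :
    exp (1 / ε * log R * (s - 1)) ≤ R⁻¹ := by
  have hκ : 0 ≤ 1 / ε * log R := by have := log_pos hR; positivity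
  calc exp (1 / ε * log R * (s - 1))
      ≤ exp (1 / ε * log R * (-ε)) := by gcongr; linarith
    _ = R⁻¹ := by
      rw [show 1 / ε * log R * (-ε) = -log R by field_simp, exp_neg, exp_log (by linarith)]

lemma mul_exp_le_div_of_slack {C M D ε s : ℝ} (hC : 0 < C) (hε : 0 < ε) (hR : 1 < C * M / D)
    (hs : s ≤ 1 - ε) : C * exp (1 / ε * log (C * M / D) * (s - 1)) ≤ D / M :=
  calc C * exp (1 / ε * log (C * M / D) * (s - 1))
      ≤ C * (C * M / D)⁻¹ := by gcongr; exact exp_mul_sub_one_le_inv hε hR hs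
    _ = D / M := by rw [inv_div, mul_div_assoc', mul_div_mul_left _ _ hC.ne']

lemma sum_mul_le_card_mul {ι : Type*} [Fintype ι] {y a : ι → ℝ} {b M : ℝ}
    (hy : ∀ i, y i ≤ b) (hb : 0 ≤ b) (ha₀ : ∀ i, 0 ≤ a i) (ha : ∀ i, a i ≤ M) :
    ∑ i, y i * a i ≤ Fintype.card ι * (b * M) := by
  rw [← nsmul_eq_mul, ← card_univ]
  exact sum_le_card_nsmul _ _ _ fun i _ ↦ mul_le_mul (hy i) (ha i) (ha₀ i) hb

theorem stmt_18_general (m n : ℕ) (A : Fin m → Fin n → ℝ) (Amax : ℝ)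
    (hA : ∀ i j, 0 ≤ A i j) (hAmax : ∀ i j, A i j ≤ Amax)
    (w : Fin n → ℝ) (wmin : ℝ) (hwmin : 0 < wmin) (hw : ∀ j, wmin ≤ w j)
    (α : ℝ) (hα : 0 < α)
    (ε : ℝ) (hε0 : 0 < ε)
    (C : ℝ) (hC : 0 < C) (hbig : 1 < C * (m : ℝ) * Amax / (ε * wmin))
    (κ : ℝ) (hκ : κ = (1 / ε) * Real.log (C * (m : ℝ) * Amax / (ε * wmin)))
    (x : Fin n → ℝ) (hx0 : ∀ j, 0 ≤ x j) (hx1 : ∀ j, x j ≤ 1)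
    (hslack : ∀ i, ∑ j, A i j * x j < 1 - ε) :
    (∀ i : Fin m, C * Real.exp (κ * (∑ j, A i j * x j - 1)) ≤ ε * wmin / ((m : ℝ) * Amax)) ∧
    (∀ j : Fin n,
      x j ^ α * ∑ i, (C * Real.exp (κ * (∑ j', A i j' * x j' - 1))) * A i j ≤ ε * w j ∧
      ∀ γ : ℝ, γ ≤ 1 - ε →
        x j ^ α * ∑ i, (C * Real.exp (κ * (∑ j', A i j' * x j' - 1))) * A i j
          ≤ w j * (1 - γ)) := by
  rw [mul_assoc C] at hbig hκ
  have hmA : 0 < (m : ℝ) * Amax :=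
    pos_of_mul_pos_right ((one_lt_div (by positivity)).mp hbig |>.trans' (by positivity)) hC.le
  have hy : ∀ i, C * exp (κ * (∑ j, A i j * x j - 1)) ≤ ε * wmin / ((m : ℝ) * Amax) := fun i ↦
    hκ ▸ mul_exp_le_div_of_slack hC hε0 hbig (hslack i).le
  refine ⟨hy, fun j ↦ ?_⟩
  have hsum : ∑ i, C * exp (κ * (∑ j', A i j' * x j' - 1)) * A i j ≤ ε * wmin := by
    calc _ ≤ (m : ℝ) * (ε * wmin / ((m : ℝ) * Amax) * Amax) := by
          simpa using sum_mul_le_card_mul hy (by positivity) (hA · j) (hAmax · j)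
      _ = ε * wmin := by
        rw [div_mul_eq_mul_div, mul_div_assoc', mul_left_comm, mul_div_cancel_right₀ _ hmA.ne']
  have hinc : x j ^ α * ∑ i, C * exp (κ * (∑ j', A i j' * x j' - 1)) * A i j ≤ ε * w j := by
    refine (mul_le_of_le_one_left ?_ (rpow_le_one (hx0 j) (hx1 j) hα.le)).trans ?_
    · exact sum_nonneg fun i _ ↦ mul_nonneg (by positivity) (hA i j)
    · exact hsum.trans (by gcongr; exact hw j)
  refine ⟨hinc, fun γ hγ ↦ hinc.trans ?_⟩
  rw [mul_comm]
  gcongr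
  · exact hwmin.le.trans (hw j)
  · linarith

/-- If all constraints have slack at least ε, then all dual variables are tiny,
and every variable satisfies the increase condition. -/
theorem stmt_18 (m n : ℕ) (A : Fin m → Fin n → ℝ) (Amax : ℝ)
    (hA : ∀ i j, 0 ≤ A i j) (hAmax : ∀ i j, A i j ≤ Amax)
    (w : Fin n → ℝ) (wmin : ℝ) (hwmin : 0 < wmin) (hw : ∀ j, wmin ≤ w j)
    (α : ℝ) (hα : 0 < α)
    (ε : ℝ) (hε0 : 0 < ε) (hε1 : ε < 1)
    (C : ℝ) (hC : 0 < C) (hbig : 1 < C * (m : ℝ) * Amax / (ε * wmin))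
    (κ : ℝ) (hκ : κ = (1 / ε) * Real.log (C * (m : ℝ) * Amax / (ε * wmin)))
    (x : Fin n → ℝ) (hx0 : ∀ j, 0 ≤ x j) (hx1 : ∀ j, x j ≤ 1)
    (hslack : ∀ i, ∑ j, A i j * x j < 1 - ε) :
    (∀ i : Fin m, C * Real.exp (κ * (∑ j, A i j * x j - 1)) ≤ ε * wmin / ((m : ℝ) * Amax)) ∧
    (∀ j : Fin n,
      x j ^ α * ∑ i, (C * Real.exp (κ * (∑ j', A i j' * x j' - 1))) * A i j ≤ ε * w j ∧
      ∀ γ : ℝ, γ ≤ 1 - ε →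
        x j ^ α * ∑ i, (C * Real.exp (κ * (∑ j', A i j' * x j' - 1))) * A i j
          ≤ w j * (1 - γ)) :=
  stmt_18_general m n A Amax hA hAmax w wmin hwmin hw α hα ε hε0 C hC hbig κ hκ x hx0 hx1 hslack
end

section
/- Let S ⊆ {1,…,m} and suppose y_i ≥ 0 satisfy: (a) y_i ≤ 1.2(ε/m)·max_k y_k for all i ∈ S, and (b) ∑_j A_{ij} x_j ≥ 1 − 1.2ε for all i ∉ S, where x ≥ 0, A ≥ 0, ε ∈ (0, 1/6]. Then ∑_{i=1}^m y_i ≤ (1 + 3ε) ∑_{j=1}^n x_j ∑_{i=1}^m y_i A_{ij}. -/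
/-!
Write `M = max_k y_k` and `T = ∑_{i ∉ S} y_i`. Condition (a) makes the loose part small,
`∑_{i ∈ S} y_i ≤ 1.2 ε M`, and also forces `M ≤ T`: a maximum attained inside `S` would satisfy
`M ≤ 1.2 ε M`, hence vanish. Condition (b) gives `(1 - 1.2 ε) T ≤ ∑_i y_i (A x)_i`. Hence
`∑_i y_i ≤ (1 + 1.2 ε) T ≤ (1 + 3 ε)(1 - 1.2 ε) T`, the last step being `0.6 ε (1 - 6 ε) ≥ 0`.
-/

open Finset

variable {ι : Type*} [Fintype ι]

theorem sum_le_of_le_div_card {f : ι → ℝ} {a : ℝ} (S : Finset ι) (ha : 0 ≤ a)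
    (hf : ∀ i ∈ S, f i ≤ a / Fintype.card ι) : ∑ i ∈ S, f i ≤ a := by
  rcases isEmpty_or_nonempty ι with hι | hι
  · simp [Finset.eq_empty_of_isEmpty S, ha]
  have hcard : (0 : ℝ) < Fintype.card ι := by exact_mod_cast Fintype.card_pos
  calc ∑ i ∈ S, f i ≤ #S • (a / Fintype.card ι) := sum_le_card_nsmul S f _ hf
    _ ≤ Fintype.card ι * (a / Fintype.card ι) := by
        rw [nsmul_eq_mul]
        gcongr
        exact_mod_cast card_le_univ S
    _ = a := mul_div_cancel₀ a hcard.ne'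

theorem ciSup_le_sum_compl [DecidableEq ι] {y : ι → ℝ} {δ : ℝ} {S : Finset ι} (hy : ∀ i, 0 ≤ y i)
    (hδ0 : 0 ≤ δ) (hδ1 : δ < 1) (hS : ∀ i ∈ S, y i ≤ δ * (⨆ k, y k) / Fintype.card ι) :
    ⨆ k, y k ≤ ∑ i ∈ Sᶜ, y i := by
  rcases isEmpty_or_nonempty ι with hι | hι
  · simpa using sum_nonneg fun i _ => hy i
  obtain ⟨i₀, hi₀⟩ := Finite.exists_max y
  have hM : ⨆ k, y k = y i₀ := le_antisymm (ciSup_le hi₀) (le_ciSup (Finite.bddAbove_range y) i₀)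
  by_cases hS₀ : i₀ ∈ S
  · have hcard : (1 : ℝ) ≤ Fintype.card ι := by exact_mod_cast Fintype.card_pos
    have hle : y i₀ ≤ δ * y i₀ :=
      (hM ▸ hS i₀ hS₀).trans (div_le_self (mul_nonneg hδ0 (hy i₀)) hcard)
    have hzero : y i₀ ≤ 0 := by nlinarith [hy i₀]
    exact hM ▸ hzero.trans (sum_nonneg fun i _ => hy i)
  · exact hM ▸ single_le_sum (fun i _ => hy i) (mem_compl.mpr hS₀)

theorem mul_sum_compl_le_sum_mul [DecidableEq ι] {y b : ι → ℝ} {t : ℝ} (S : Finset ι) (hy : ∀ i, 0 ≤ y i)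
    (hb0 : ∀ i, 0 ≤ b i) (hb : ∀ i ∉ S, t ≤ b i) : t * ∑ i ∈ Sᶜ, y i ≤ ∑ i, y i * b i := by
  rw [← sum_add_sum_compl S, mul_sum]
  have hloose : 0 ≤ ∑ i ∈ S, y i * b i := sum_nonneg fun i _ => mul_nonneg (hy i) (hb0 i)
  have htight : ∑ i ∈ Sᶜ, t * y i ≤ ∑ i ∈ Sᶜ, y i * b i := sum_le_sum fun i hi => by
    rw [mul_comm]
    exact mul_le_mul_of_nonneg_left (hb i (mem_compl.mp hi)) (hy i)
  linarith

theorem sum_mul_sum_comm {κ : Type*} [Fintype κ] (x : κ → ℝ) (y : ι → ℝ) (A : ι → κ → ℝ) :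
    ∑ j, x j * ∑ i, y i * A i j = ∑ i, y i * ∑ j, A i j * x j := by
  simp only [mul_sum]
  rw [sum_comm]
  exact sum_congr rfl fun _ _ => sum_congr rfl fun _ _ => by ring

/-- Approximate complementary slackness in aggregate: if the constraints outside S
are nearly tight and the dual variables in S are small relative to the largest dual
variable, then ∑_i y_i ≤ (1+3ε) ∑_j x_j ∑_i y_i A_{ij}. -/
theorem stmt_19 (m n : ℕ) (S : Finset (Fin m))
    (y : Fin m → ℝ) (hy : ∀ i, 0 ≤ y i)
    (x : Fin n → ℝ) (hx : ∀ j, 0 ≤ x j)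
    (A : Fin m → Fin n → ℝ) (hA : ∀ i j, 0 ≤ A i j)
    (ε : ℝ) (hε0 : 0 < ε) (hε6 : ε ≤ 1 / 6)
    (ha : ∀ i ∈ S, y i ≤ 1.2 * (ε / (m : ℝ)) * ⨆ k, y k)
    (hb : ∀ i ∉ S, 1 - 1.2 * ε ≤ ∑ j, A i j * x j) :
    ∑ i, y i ≤ (1 + 3 * ε) * ∑ j, x j * ∑ i, y i * A i j := by
  set M := ⨆ k, y k
  have ha' : ∀ i ∈ S, y i ≤ 1.2 * ε * M / Fintype.card (Fin m) := fun i hi => by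
    rw [Fintype.card_fin]
    exact (ha i hi).trans_eq (by ring)
  have hM : 0 ≤ M := Real.iSup_nonneg hy
  have hloose := sum_le_of_le_div_card S (by positivity) ha'
  have hmax := ciSup_le_sum_compl hy (by positivity) (by linarith) ha'
  have htight := mul_sum_compl_le_sum_mul S hy
    (fun i => sum_nonneg fun j _ => mul_nonneg (hA i j) (hx j)) hb
  have hT : 0 ≤ ∑ i ∈ Sᶜ, y i := sum_nonneg fun i _ => hy i
  rw [sum_mul_sum_comm, ← sum_add_sum_compl S y]
  calc ∑ i ∈ S, y i + ∑ i ∈ Sᶜ, y i ≤ (1 + 1.2 * ε) * ∑ i ∈ Sᶜ, y i := by nlinarith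
    _ ≤ (1 + 3 * ε) * ((1 - 1.2 * ε) * ∑ i ∈ Sᶜ, y i) := by
        nlinarith [mul_nonneg (mul_nonneg hε0.le (by linarith : (0 : ℝ) ≤ 1 / 6 - ε)) hT]
    _ ≤ (1 + 3 * ε) * ∑ i, y i * ∑ j, A i j * x j := by gcongr
end
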